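/- arXiv:2208.04765 — 2 statements merged into one kernel-verified Lean document; each statement's English description precedes it below -/
import Mathlib

section
/- Let M₁ be single-valued with single-valued resolvent res_{α₂M₁}, M₂ have single-valued resolvent res_{α₁M₂}, and M₃ be single-valued, with α₁, α₂ > 0. If (v, i) is a fixed point of the iteration v ↦ res_{α₁M₂}(v - α₁M₃(v) + α₁ i), i ↦ res_{α₂M₁}(i - α₂ v + α₂ v*), then v* ∈ (M₁ + (M₂ + M₃)^{-1})(i), i.e., i solves the three-element series-parallel circuit equation 0 ∈ M₁(i) + (M₂ + M₃)^{-1}(i) - v*. -/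
/-!
A point `x` is the output of the resolvent `J = (I + α A)⁻¹` at `x + α • w` only if `w ∈ A x`.
Writing the two inputs of the iteration as `v + α₁ • (i - M₃ v)` and `i + α₂ • (vs - v)`, the fixed
point equations therefore say `i - M₃ v ∈ M₂ v` and `M₁ i = vs - v`, which is the circuit equation
with the voltage `v` across the parallel branch.
-/

section Resolvent

variable {R E : Type*} [Ring R] [AddCommGroup E] [Module R E]

/-- `J` is a selection of the resolvent `(I + α A)⁻¹` of a relation `A`. -/
def IsResolvent (α : R) (A : Set (E × E)) (J : E → E) : Prop :=
  ∀ u, ∃ y, (J u, y) ∈ A ∧ J u + α • y = u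

theorem isResolvent_graph {α : R} {f : E → E} {J : E → E} (hJ : ∀ u, J u + α • f (J u) = u) :
    IsResolvent α (Function.graph f) J :=
  fun u => ⟨f (J u), rfl, hJ u⟩

theorem IsResolvent.mem_of_apply_add_smul_eq [IsCancelMulZero R] [Module.IsTorsionFree R E]
    {α : R} {A : Set (E × E)} {J : E → E} (hJ : IsResolvent α A J) (hα : α ≠ 0) {x w : E} (hx : J (x + α • w) = x) :
    (x, w) ∈ A := by
  obtain ⟨y, hyA, hy⟩ := hJ (x + α • w)
  rw [hx] at hyA hy
  have hyw : y = w := smul_right_injective E hα (add_left_cancel hy)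
  exact hyw ▸ hyA

end Resolvent

theorem nested_splitting_fixed_point_solves_circuit_general
    {H : Type*} [NormedAddCommGroup H] [InnerProductSpace ℝ H]
    (M₁ M₃ : H → H) (M₂ : Set (H × H))
    (α₁ α₂ : ℝ) (hα₁ : 0 < α₁) (hα₂ : 0 < α₂)
    (J₂ : H → H)  -- resolvent of α₁ M₂
    (hJ₂ : ∀ u : H, ∃ y : H, (J₂ u, y) ∈ M₂ ∧ J₂ u + α₁ • y = u)
    (J₁ : H → H)  -- resolvent of α₂ M₁
    (hJ₁ : ∀ u : H, J₁ u + α₂ • M₁ (J₁ u) = u)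
    (v i vs : H)
    (hv : J₂ (v - α₁ • M₃ v + α₁ • i) = v)
    (hi : J₁ (i - α₂ • v + α₂ • vs) = i) :
    ∃ v' y : H, (v', y) ∈ M₂ ∧ y + M₃ v' = i ∧ M₁ i + v' = vs := by
  have hv' : J₂ (v + α₁ • (i - M₃ v)) = v := by
    convert hv using 2; module
  have hi' : J₁ (i + α₂ • (vs - v)) = i := by
    convert hi using 2; module
  have hM₂ : (v, i - M₃ v) ∈ M₂ :=
    IsResolvent.mem_of_apply_add_smul_eq (J := J₂) hJ₂ hα₁.ne' hv'
  have hM₁ : M₁ i = vs - v :=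
    (isResolvent_graph hJ₁).mem_of_apply_add_smul_eq hα₂.ne' hi'
  exact ⟨v, i - M₃ v, hM₂, sub_add_cancel _ _, by rw [hM₁, sub_add_cancel]⟩

/-- Nested forward/backward splitting: a fixed point `(v, i)` of the iteration solves the
three-element series-parallel circuit equation `v* ∈ (M₁ + (M₂ + M₃)⁻¹)(i)`. -/
theorem nested_splitting_fixed_point_solves_circuit
    {H : Type*} [NormedAddCommGroup H] [InnerProductSpace ℝ H] [CompleteSpace H]
    (M₁ M₃ : H → H) (M₂ : Set (H × H))
    (α₁ α₂ : ℝ) (hα₁ : 0 < α₁) (hα₂ : 0 < α₂)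
    (J₂ : H → H)  -- resolvent of α₁ M₂
    (hJ₂ : ∀ u : H, ∃ y : H, (J₂ u, y) ∈ M₂ ∧ J₂ u + α₁ • y = u)
    (hJ₂uniq : ∀ u x y : H, (x, y) ∈ M₂ → x + α₁ • y = u → J₂ u = x)
    (J₁ : H → H)  -- resolvent of α₂ M₁
    (hJ₁ : ∀ u : H, J₁ u + α₂ • M₁ (J₁ u) = u)
    (v i vs : H)
    (hv : J₂ (v - α₁ • M₃ v + α₁ • i) = v)
    (hi : J₁ (i - α₂ • v + α₂ • vs) = i) :
    ∃ v' y : H, (v', y) ∈ M₂ ∧ y + M₃ v' = i ∧ M₁ i + v' = vs :=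
  nested_splitting_fixed_point_solves_circuit_general M₁ M₃ M₂ α₁ α₂ hα₁ hα₂ J₂ hJ₂ J₁ hJ₁ v i vs hv
    hi
end

section
/- Conversely, if v* = M₁(i) + v for some v with (v, i) ∈ M₂ + M₃ (i.e., i ∈ (M₂+M₃)(v)), then (v, i) is a fixed point of the nested splitting iteration v ↦ res_{α₁M₂}(v - α₁M₃(v) + α₁i), i ↦ res_{α₂M₁}(i - α₂v + α₂v*). -/
open RealInnerProductSpace

theorem circuit_solution_is_nested_splitting_fixed_point_general
    {H : Type*} [NormedAddCommGroup H] [InnerProductSpace ℝ H]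
    (M₁ M₃ : H → H) (M₂ : Set (H × H))
    (α₁ α₂ : ℝ)
    (J₂ : H → H)  -- resolvent of α₁ M₂
    (hJ₂uniq : ∀ u x y : H, (x, y) ∈ M₂ → x + α₁ • y = u → J₂ u = x)
    (J₁ : H → H)  -- resolvent of α₂ M₁
    (hJ₁uniq : ∀ u x : H, x + α₂ • M₁ x = u → J₁ u = x)
    (v i vs : H)
    (hvi : ∃ y : H, (v, y) ∈ M₂ ∧ y + M₃ v = i)
    (hvs : M₁ i + v = vs) :
    J₂ (v - α₁ • M₃ v + α₁ • i) = v ∧ J₁ (i - α₂ • v + α₂ • vs) = i := by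
  obtain ⟨y, hy, rfl⟩ := hvi
  subst hvs
  exact ⟨hJ₂uniq _ v y hy (by module), hJ₁uniq _ _ (by module)⟩

/-- Converse of the nested splitting: a solution of the three-element series-parallel
circuit equation is a fixed point of the nested forward/backward iteration. -/
theorem circuit_solution_is_nested_splitting_fixed_point
    {H : Type*} [NormedAddCommGroup H] [InnerProductSpace ℝ H] [CompleteSpace H]
    (M₁ M₃ : H → H) (M₂ : Set (H × H))
    (α₁ α₂ : ℝ) (hα₁ : 0 < α₁) (hα₂ : 0 < α₂)
    (J₂ : H → H)  -- resolvent of α₁ M₂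
    (hJ₂ : ∀ u : H, ∃ y : H, (J₂ u, y) ∈ M₂ ∧ J₂ u + α₁ • y = u)
    (hJ₂uniq : ∀ u x y : H, (x, y) ∈ M₂ → x + α₁ • y = u → J₂ u = x)
    (J₁ : H → H)  -- resolvent of α₂ M₁
    (hJ₁ : ∀ u : H, J₁ u + α₂ • M₁ (J₁ u) = u)
    (hJ₁uniq : ∀ u x : H, x + α₂ • M₁ x = u → J₁ u = x)
    (v i vs : H)
    (hvi : ∃ y : H, (v, y) ∈ M₂ ∧ y + M₃ v = i)
    (hvs : M₁ i + v = vs) :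
    J₂ (v - α₁ • M₃ v + α₁ • i) = v ∧ J₁ (i - α₂ • v + α₂ • vs) = i :=
  circuit_solution_is_nested_splitting_fixed_point_general M₁ M₃ M₂ α₁ α₂ J₂ hJ₂uniq J₁ hJ₁uniq v i
    vs hvi hvs
end
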